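/- A second-countable topological space X is a G_δ-space (i.e., every closed subset of X is a countable intersection of open sets) if and only if X has a countable closed network. -/

import Mathlib

/-! In a space with a countable closed network every open set `U` is the union of the countably
many network members inside it, hence `F_σ`. Conversely, if every open set is `F_σ`, writing each
member of a countable basis as a countable union of closed sets yields a countable closed network. -/

open Set TopologicalSpace

section

variable {X : Type*} [TopologicalSpace X]

def IsNetwork (𝒩 : Set (Set X)) : Prop :=
  ∀ (x : X) (U : Set X), IsOpen U → x ∈ U → ∃ N ∈ 𝒩, x ∈ N ∧ N ⊆ U

theorem IsNetwork.sUnion_subset_eq {𝒩 : Set (Set X)} (h𝒩 : IsNetwork 𝒩) {U : Set X}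
    (hU : IsOpen U) : ⋃₀ {N ∈ 𝒩 | N ⊆ U} = U := by
  refine (sUnion_subset fun N hN => hN.2).antisymm fun x hx => ?_
  obtain ⟨N, hN, hxN, hNU⟩ := h𝒩 x U hU hx
  exact ⟨N, ⟨hN, hNU⟩, hxN⟩

theorem IsClosed.isGδ_of_isNetwork {𝒩 : Set (Set X)} (h𝒩 : IsNetwork 𝒩) (hc : 𝒩.Countable)
    (hcl : ∀ N ∈ 𝒩, IsClosed N) {C : Set X} (hC : IsClosed C) : IsGδ C := by
  refine ⟨compl '' {N ∈ 𝒩 | N ⊆ Cᶜ}, ?_, (hc.mono (sep_subset _ _)).image _, ?_⟩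
  · rintro _ ⟨N, hN, rfl⟩
    exact (hcl N hN.1).isOpen_compl
  · rw [← compl_sUnion, h𝒩.sUnion_subset_eq hC.isOpen_compl, compl_compl]

theorem IsGδ.exists_countable_isClosed_sUnion_eq_compl {s : Set X} (hs : IsGδ s) :
    ∃ 𝒯 : Set (Set X), 𝒯.Countable ∧ (∀ t ∈ 𝒯, IsClosed t) ∧ ⋃₀ 𝒯 = sᶜ := by
  obtain ⟨T, hTo, hTc, rfl⟩ := hs
  refine ⟨compl '' T, hTc.image _, ?_, (compl_sInter T).symm⟩
  rintro _ ⟨t, ht, rfl⟩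
  exact (hTo t ht).isClosed_compl

theorem TopologicalSpace.IsTopologicalBasis.isNetwork_biUnion {b : Set (Set X)}
    (hb : IsTopologicalBasis b) {𝒯 : Set X → Set (Set X)} (h𝒯 : ∀ s ∈ b, ⋃₀ 𝒯 s = s) :
    IsNetwork (⋃ s ∈ b, 𝒯 s) := by
  intro x U hU hxU
  obtain ⟨s, hs, hxs, hsU⟩ := hb.exists_subset_of_mem_open hxU hU
  rw [← h𝒯 s hs] at hxs hsU
  obtain ⟨t, ht, hxt⟩ := hxs
  exact ⟨t, mem_biUnion hs ht, hxt, (subset_sUnion_of_mem ht).trans hsU⟩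

end

/-- A second-countable space is a `G_δ`-space iff it has a countable closed network. -/
theorem gdeltaSpace_iff_countable_closed_network {X : Type*} [TopologicalSpace X]
    [SecondCountableTopology X] :
    (∀ C : Set X, IsClosed C → IsGδ C) ↔
      ∃ 𝒩 : Set (Set X), 𝒩.Countable ∧ (∀ N ∈ 𝒩, IsClosed N) ∧
        ∀ (x : X) (U : Set X), IsOpen U → x ∈ U → ∃ N ∈ 𝒩, x ∈ N ∧ N ⊆ U := by
  constructor
  · intro h
    obtain ⟨b, hbc, -, hb⟩ := exists_countable_basis X
    choose! 𝒯 h𝒯c h𝒯cl h𝒯 using fun s (hs : s ∈ b) =>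
      (h sᶜ (hb.isOpen hs).isClosed_compl).exists_countable_isClosed_sUnion_eq_compl
    refine ⟨⋃ s ∈ b, 𝒯 s, hbc.biUnion h𝒯c, ?_, hb.isNetwork_biUnion fun s hs => ?_⟩
    · simp only [mem_iUnion]
      rintro N ⟨s, hs, hN⟩
      exact h𝒯cl s hs N hN
    · rw [h𝒯 s hs, compl_compl]
  · rintro ⟨𝒩, hc, hcl, h𝒩⟩ C hC
    exact hC.isGδ_of_isNetwork h𝒩 hc hcl
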